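/- arXiv:2206.09750 — 5 statements merged into one kernel-verified Lean document; each statement's English description precedes it below -/
import Mathlib

section
/- Every tree on n ≥ 2 vertices has a path decomposition of width at most log₂(n). -/
/-!
Root the tree and cut it along heavy paths. For a vertex `v` whose heavy child `m` has the
largest subtree among its children, the subtree of `v` is decomposed as: the decompositions of
the light children's subtrees, each with `v` added to every bag, then the bag `{v, m}`, then the
decomposition of the subtree of `m`, whose first bag contains `m`. A light subtree has at most
half as many vertices as the subtree of `v`, so adding `v` to its bags stays within the bound:
by induction, every bag has at most `log₂ |subtree| + 1` vertices.
-/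

open Finset

/-- `IsPathDecomp G X` : the sequence of bags `X 0, …, X (ℓ-1)` is a path
decomposition of `G`: every vertex is in some bag, every edge has both
endpoints in a common bag, and the bags containing a fixed vertex form a
(nonempty) contiguous interval. -/
def IsPathDecomp {V : Type} (G : SimpleGraph V) {ℓ : ℕ} (X : Fin ℓ → Finset V) : Prop :=
  (∀ v : V, ∃ i, v ∈ X i) ∧
  (∀ u v : V, G.Adj u v → ∃ i, u ∈ X i ∧ v ∈ X i) ∧
  (∀ (v : V) (i j k : Fin ℓ), i ≤ j → j ≤ k → v ∈ X i → v ∈ X k → v ∈ X j)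

section Contiguous

variable {V : Type*} {u : V} {L L₁ L₂ : List (Finset V)}

def ContiguousIn (u : V) (L : List (Finset V)) : Prop :=
  ∀ i j k, i ≤ j → j ≤ k → u ∈ L.getD i ∅ → u ∈ L.getD k ∅ → u ∈ L.getD j ∅

lemma lt_length_of_mem_getD {i : ℕ} (h : u ∈ L.getD i ∅) : i < L.length := by
  by_contra! hi
  rw [List.getD_eq_default _ _ hi] at h
  exact notMem_empty u h

lemma getD_mem_of_mem_getD {i : ℕ} (h : u ∈ L.getD i ∅) : L.getD i ∅ ∈ L := by
  rw [List.getD_eq_getElem _ _ (lt_length_of_mem_getD h)]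
  exact List.getElem_mem _

lemma mem_getD_zero_of_forall_mem (h : ∀ b ∈ L, u ∈ b) (hL : L ≠ []) : u ∈ L.getD 0 ∅ := by
  rw [List.getD_eq_getElem _ _ (List.length_pos_iff.mpr hL)]
  exact h _ (List.getElem_mem _)

lemma contiguousIn_of_forall_mem (h : ∀ b ∈ L, u ∈ b) : ContiguousIn u L := by
  intro i j k _ hjk _ hk
  have hj : j < L.length := hjk.trans_lt (lt_length_of_mem_getD hk)
  rw [List.getD_eq_getElem _ _ hj]
  exact h _ (List.getElem_mem hj)

lemma contiguousIn_of_forall_notMem (h : ∀ b ∈ L, u ∉ b) : ContiguousIn u L :=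
  fun _ _ _ _ _ hi _ => absurd hi (h _ (getD_mem_of_mem_getD hi))

lemma contiguousIn_singleton (u : V) (b : Finset V) : ContiguousIn u [b] := by
  by_cases hu : u ∈ b
  · exact contiguousIn_of_forall_mem (by simpa)
  · exact contiguousIn_of_forall_notMem (by simpa)

lemma ContiguousIn.append (h₁ : ContiguousIn u L₁) (h₂ : ContiguousIn u L₂)
    (hjoin : (∃ b ∈ L₁, u ∈ b) → (∃ b ∈ L₂, u ∈ b) →
      u ∈ L₁.getD (L₁.length - 1) ∅ ∧ u ∈ L₂.getD 0 ∅) :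
    ContiguousIn u (L₁ ++ L₂) := by
  intro i j k hij hjk hi hk
  rcases lt_or_ge k L₁.length with hk₁ | hk₁
  · rw [List.getD_append _ _ _ _ (by omega)] at hi ⊢
    rw [List.getD_append _ _ _ _ hk₁] at hk
    exact h₁ i j k hij hjk hi hk
  rw [List.getD_append_right _ _ _ _ hk₁] at hk
  rcases le_or_gt L₁.length i with hi₁ | hi₁
  · rw [List.getD_append_right _ _ _ _ hi₁] at hi
    rw [List.getD_append_right _ _ _ _ (by omega)]
    exact h₂ _ _ _ (by omega) (by omega) hi hk
  rw [List.getD_append _ _ _ _ hi₁] at hi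
  obtain ⟨hlast, hhead⟩ := hjoin ⟨_, getD_mem_of_mem_getD hi, hi⟩ ⟨_, getD_mem_of_mem_getD hk, hk⟩
  rcases lt_or_ge j L₁.length with hj₁ | hj₁
  · rw [List.getD_append _ _ _ _ hj₁]
    exact h₁ i j _ hij (by omega) hi hlast
  · rw [List.getD_append_right _ _ _ _ hj₁]
    exact h₂ 0 _ _ (by omega) (by omega) hhead hk

lemma contiguousIn_flatten {Ls : List (List (Finset V))} (h : ∀ L ∈ Ls, ContiguousIn u L)
    (hsep : Ls.Pairwise fun L₁ L₂ => (∃ b ∈ L₁, u ∈ b) → ∀ b ∈ L₂, u ∉ b) :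
    ContiguousIn u Ls.flatten := by
  induction Ls with
  | nil => exact contiguousIn_of_forall_notMem (by simp)
  | cons L Ls ih =>
    rw [List.pairwise_cons] at hsep
    refine (h L (by simp)).append (ih (fun L' hL' => h L' (by simp [hL'])) hsep.2) ?_
    rintro hL ⟨b, hb, hub⟩
    obtain ⟨L', hL', hbL'⟩ := List.mem_flatten.mp hb
    exact absurd hub (hsep.1 L' hL' hL b hbL')

lemma ContiguousIn.map_insert [DecidableEq V] (h : ContiguousIn u L) (v : V) :
    ContiguousIn u (L.map (insert v)) := by
  rcases eq_or_ne u v with rfl | huv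
  · exact contiguousIn_of_forall_mem (by simp)
  have hmem : ∀ n, u ∈ (L.map (insert v)).getD n ∅ ↔ u ∈ L.getD n ∅ := by
    intro n
    simp only [List.getD_eq_getElem?_getD, List.getElem?_map]
    cases L[n]? <;> simp [huv]
  intro i j k hij hjk hi hk
  rw [hmem] at hi hk ⊢
  exact h i j k hij hjk hi hk

end Contiguous

lemma isPathDecomp_of_list {V : Type} {G : SimpleGraph V} {L : List (Finset V)}
    (hcover : ∀ v, ∃ b ∈ L, v ∈ b) (hedge : ∀ u v, G.Adj u v → ∃ b ∈ L, u ∈ b ∧ v ∈ b)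
    (hcont : ∀ v, ContiguousIn v L) : IsPathDecomp G fun i : Fin L.length => L[i] := by
  refine ⟨fun v => ?_, fun u v huv => ?_, fun v i j k hij hjk hi hk => ?_⟩
  · obtain ⟨b, hb, hvb⟩ := hcover v
    obtain ⟨i, hi, rfl⟩ := List.mem_iff_getElem.mp hb
    exact ⟨⟨i, hi⟩, hvb⟩
  · obtain ⟨b, hb, hub, hvb⟩ := hedge u v huv
    obtain ⟨i, hi, rfl⟩ := List.mem_iff_getElem.mp hb
    exact ⟨⟨i, hi⟩, hub, hvb⟩
  · have hv := hcont v i j k hij hjk (by rwa [List.getD_eq_getElem _ _ i.isLt])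
      (by rwa [List.getD_eq_getElem _ _ k.isLt])
    rwa [List.getD_eq_getElem _ _ j.isLt] at hv

/-- A rooted tree given by parent pointers; `depth` certifies that iterating `parent` reaches
`root`. -/
structure ParentTree (V : Type*) where
  root : V
  parent : V → V
  depth : V → ℕ
  depth_root : depth root = 0
  depth_parent : ∀ v, v ≠ root → depth v = depth (parent v) + 1

namespace ParentTree

variable {V : Type*} (T : ParentTree V)

lemma eq_root_of_depth_eq_zero {v : V} (h : T.depth v = 0) : v = T.root := by
  by_contra hv
  have := T.depth_parent v hv
  omega

lemma depth_iterate_parent {u : V} {k : ℕ} (hk : k ≤ T.depth u) :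
    T.depth (T.parent^[k] u) = T.depth u - k := by
  induction k with
  | zero => rfl
  | succ k ih =>
    have hd := ih (by omega)
    have hne : T.parent^[k] u ≠ T.root := fun h => by
      rw [h, T.depth_root] at hd
      omega
    have := T.depth_parent _ hne
    rw [Function.iterate_succ_apply']
    omega

lemma iterate_parent_depth (u : V) : T.parent^[T.depth u] u = T.root :=
  T.eq_root_of_depth_eq_zero (by rw [T.depth_iterate_parent le_rfl, Nat.sub_self])

variable [Fintype V] [DecidableEq V]

def subtree (v : V) : Finset V := {u | T.parent^[T.depth u - T.depth v] u = v}

def children (v : V) : Finset V := {c | c ≠ T.root ∧ T.parent c = v}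

lemma mem_subtree_self (v : V) : v ∈ T.subtree v := by simp [subtree]

lemma subtree_root : T.subtree T.root = univ := by
  ext u
  simp [subtree, T.depth_root, T.iterate_parent_depth]

variable {T}

lemma mem_subtree {u v : V} : u ∈ T.subtree v ↔ T.parent^[T.depth u - T.depth v] u = v := by
  simp [subtree]

lemma mem_children {c v : V} : c ∈ T.children v ↔ c ≠ T.root ∧ T.parent c = v := by
  simp [children]

lemma depth_le_of_mem_subtree {u v : V} (h : u ∈ T.subtree v) : T.depth v ≤ T.depth u := by
  by_contra! hlt
  rw [mem_subtree, Nat.sub_eq_zero_of_le hlt.le, Function.iterate_zero_apply] at h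
  exact hlt.ne (by rw [h])

lemma depth_of_mem_children {c v : V} (hc : c ∈ T.children v) : T.depth c = T.depth v + 1 := by
  obtain ⟨hcr, rfl⟩ := mem_children.mp hc
  exact T.depth_parent c hcr

lemma subtree_subset_of_mem_children {c v : V} (hc : c ∈ T.children v) :
    T.subtree c ⊆ T.subtree v := by
  intro u hu
  have hdc := depth_of_mem_children hc
  have hdu := depth_le_of_mem_subtree hu
  rw [mem_subtree] at hu ⊢
  rw [show T.depth u - T.depth v = T.depth u - T.depth c + 1 by omega,
    Function.iterate_succ_apply', hu, (mem_children.mp hc).2]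

lemma notMem_subtree_of_mem_children {c v : V} (hc : c ∈ T.children v) : v ∉ T.subtree c :=
  fun h => by
    have := depth_le_of_mem_subtree h
    have := depth_of_mem_children hc
    omega

lemma disjoint_subtree_of_mem_children {c₁ c₂ v : V} (h₁ : c₁ ∈ T.children v)
    (h₂ : c₂ ∈ T.children v) (hne : c₁ ≠ c₂) : Disjoint (T.subtree c₁) (T.subtree c₂) := by
  rw [disjoint_left]
  intro u hu₁ hu₂
  rw [mem_subtree, depth_of_mem_children h₁] at hu₁
  rw [mem_subtree, depth_of_mem_children h₂] at hu₂
  exact hne (hu₁.symm.trans hu₂)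

lemma exists_mem_children_of_mem_subtree {u v : V} (hu : u ∈ T.subtree v) (hne : u ≠ v) :
    ∃ c ∈ T.children v, u ∈ T.subtree c := by
  have hdv := depth_le_of_mem_subtree hu
  rw [mem_subtree] at hu
  obtain ⟨e, he⟩ : ∃ e, T.depth u - T.depth v = e + 1 := by
    refine Nat.exists_eq_add_one.mpr (Nat.pos_of_ne_zero fun h => hne ?_)
    rwa [h, Function.iterate_zero_apply] at hu
  have hdc : T.depth (T.parent^[e] u) = T.depth v + 1 := by
    rw [T.depth_iterate_parent (by omega)]
    omega
  refine ⟨T.parent^[e] u, mem_children.mpr ⟨fun h => ?_, ?_⟩, ?_⟩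
  · rw [h, T.depth_root] at hdc
    omega
  · rwa [he, Function.iterate_succ_apply'] at hu
  · rw [mem_subtree, hdc, show T.depth u - (T.depth v + 1) = e by omega]

lemma card_subtree_lt_of_mem_children {c v : V} (hc : c ∈ T.children v) :
    #(T.subtree c) < #(T.subtree v) :=
  card_lt_card <| (ssubset_iff_of_subset (subtree_subset_of_mem_children hc)).mpr
    ⟨v, T.mem_subtree_self v, notMem_subtree_of_mem_children hc⟩

lemma card_subtree_add_lt {c₁ c₂ v : V} (h₁ : c₁ ∈ T.children v) (h₂ : c₂ ∈ T.children v)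
    (hne : c₁ ≠ c₂) : #(T.subtree c₁) + #(T.subtree c₂) < #(T.subtree v) := by
  rw [← card_union_of_disjoint (disjoint_subtree_of_mem_children h₁ h₂ hne)]
  refine card_lt_card <| (ssubset_iff_of_subset ?_).mpr ⟨v, T.mem_subtree_self v, ?_⟩
  · exact union_subset (subtree_subset_of_mem_children h₁) (subtree_subset_of_mem_children h₂)
  · rw [mem_union, not_or]
    exact ⟨notMem_subtree_of_mem_children h₁, notMem_subtree_of_mem_children h₂⟩

lemma log_card_subtree_add_one_le {c m v : V} (hc : c ∈ T.children v) (hm : m ∈ T.children v)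
    (hcm : c ≠ m) (hle : #(T.subtree c) ≤ #(T.subtree m)) :
    Nat.log 2 #(T.subtree c) + 1 ≤ Nat.log 2 #(T.subtree v) := by
  have hpos : #(T.subtree c) ≠ 0 := (card_pos.mpr ⟨c, T.mem_subtree_self c⟩).ne'
  rw [← Nat.log_mul_base one_lt_two hpos]
  exact Nat.log_mono_right (by have := card_subtree_add_lt hc hm hcm; omega)

variable (T)

noncomputable def heavyChild (v : V) : Option V :=
  (T.children v).toList.argmax fun c => #(T.subtree c)

noncomputable def lightBags (v m : V) (B : V → List (Finset V)) : List (Finset V) :=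
  ((T.children v).erase m).toList.flatMap fun c => (B c).map (insert v)

noncomputable def glue (v m : V) (B : V → List (Finset V)) : List (Finset V) :=
  T.lightBags v m B ++ [{v, m}] ++ B m

-- The first argument is fuel: `isSubtreeDecomp_bags` only needs it to bound `#(T.subtree v)`.
noncomputable def bags : ℕ → V → List (Finset V)
  | 0, _ => []
  | k + 1, v =>
    match T.heavyChild v with
    | none => [{v}]
    | some m => T.glue v m (bags k)

structure IsSubtreeDecomp (v : V) (L : List (Finset V)) : Prop where
  subset_subtree : ∀ b ∈ L, b ⊆ T.subtree v
  mem_head : v ∈ L.getD 0 ∅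
  exists_parent_mem : ∀ u ∈ T.subtree v, u ≠ v → ∃ b ∈ L, u ∈ b ∧ T.parent u ∈ b
  card_le : ∀ b ∈ L, #b ≤ Nat.log 2 #(T.subtree v) + 1
  contiguousIn : ∀ u, ContiguousIn u L

variable {T}

lemma heavyChild_eq_none {v : V} : T.heavyChild v = none ↔ T.children v = ∅ := by
  simp [heavyChild, List.argmax_eq_none]

lemma mem_children_of_heavyChild {m v : V} (h : T.heavyChild v = some m) : m ∈ T.children v :=
  mem_toList.mp (List.argmax_mem h)

lemma card_subtree_le_heavyChild {c m v : V} (h : T.heavyChild v = some m)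
    (hc : c ∈ T.children v) : #(T.subtree c) ≤ #(T.subtree m) :=
  List.le_of_mem_argmax (f := fun c => #(T.subtree c)) (mem_toList.mpr hc) h

lemma isSubtreeDecomp_singleton {v : V} (hv : T.children v = ∅) : T.IsSubtreeDecomp v [{v}] where
  subset_subtree := by simpa using T.mem_subtree_self v
  mem_head := by simp
  exists_parent_mem u hu huv := by
    obtain ⟨c, hc, -⟩ := exists_mem_children_of_mem_subtree hu huv
    simp [hv] at hc
  card_le := by simp
  contiguousIn u := contiguousIn_singleton u _

lemma IsSubtreeDecomp.exists_mem {v : V} {L : List (Finset V)} (hL : T.IsSubtreeDecomp v L)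
    {u : V} (hu : u ∈ T.subtree v) : ∃ b ∈ L, u ∈ b := by
  rcases eq_or_ne u v with rfl | huv
  · exact ⟨_, getD_mem_of_mem_getD hL.mem_head, hL.mem_head⟩
  · obtain ⟨b, hb, hub, -⟩ := hL.exists_parent_mem u hu huv
    exact ⟨b, hb, hub⟩

variable {v m : V} {B : V → List (Finset V)}

lemma mem_lightBags {b : Finset V} :
    b ∈ T.lightBags v m B ↔ ∃ c ∈ (T.children v).erase m, ∃ b' ∈ B c, insert v b' = b := by
  simp [lightBags]

lemma mem_glue {b : Finset V} :
    b ∈ T.glue v m B ↔ b ∈ T.lightBags v m B ∨ b = {v, m} ∨ b ∈ B m := by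
  simp [glue]

lemma mem_of_mem_lightBags_append {b : Finset V} (hb : b ∈ T.lightBags v m B ++ [{v, m}]) :
    v ∈ b := by
  rcases List.mem_append.mp hb with hb | hb
  · obtain ⟨c, -, b', -, rfl⟩ := mem_lightBags.mp hb
    exact mem_insert_self v b'
  · simp [List.mem_singleton.mp hb]

lemma mem_getD_zero_glue : v ∈ (T.glue v m B).getD 0 ∅ := by
  rw [glue, List.getD_append _ _ _ _ (by simp)]
  exact mem_getD_zero_of_forall_mem (fun _ => mem_of_mem_lightBags_append) (by simp)

section Glue

variable (hB : ∀ c ∈ T.children v, T.IsSubtreeDecomp c (B c))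
include hB

lemma subset_subtree_of_mem_glue (hm : m ∈ T.children v) {b : Finset V}
    (hb : b ∈ T.glue v m B) : b ⊆ T.subtree v := by
  have hsub : ∀ c ∈ T.children v, ∀ b ∈ B c, b ⊆ T.subtree v := fun c hc b hb =>
    ((hB c hc).subset_subtree b hb).trans (subtree_subset_of_mem_children hc)
  rcases mem_glue.mp hb with hb | rfl | hb
  · obtain ⟨c, hc, b', hb', rfl⟩ := mem_lightBags.mp hb
    exact insert_subset (T.mem_subtree_self v) (hsub c (mem_of_mem_erase hc) b' hb')
  · exact insert_subset (T.mem_subtree_self v) <| singleton_subset_iff.mpr <|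
      subtree_subset_of_mem_children hm (T.mem_subtree_self m)
  · exact hsub m hm b hb

lemma exists_parent_mem_glue {u : V} (hu : u ∈ T.subtree v) (huv : u ≠ v) :
    ∃ b ∈ T.glue v m B, u ∈ b ∧ T.parent u ∈ b := by
  obtain ⟨c, hc, huc⟩ := exists_mem_children_of_mem_subtree hu huv
  have hpc : T.parent c = v := (mem_children.mp hc).2
  rcases eq_or_ne c m with rfl | hcm
  · rcases eq_or_ne u c with rfl | huc'
    · exact ⟨{v, u}, mem_glue.mpr (Or.inr (Or.inl rfl)), by simp, by simp [hpc]⟩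
    · obtain ⟨b, hb, hub⟩ := (hB c hc).exists_parent_mem u huc huc'
      exact ⟨b, mem_glue.mpr (Or.inr (Or.inr hb)), hub⟩
  have hlight : ∀ b ∈ B c, insert v b ∈ T.glue v m B := fun b hb =>
    mem_glue.mpr (Or.inl (mem_lightBags.mpr ⟨c, mem_erase.mpr ⟨hcm, hc⟩, b, hb, rfl⟩))
  rcases eq_or_ne u c with rfl | huc'
  · exact ⟨_, hlight _ (getD_mem_of_mem_getD (hB u hc).mem_head),
      mem_insert_of_mem (hB u hc).mem_head, by simp [hpc]⟩
  · obtain ⟨b, hb, hub, hpub⟩ := (hB c hc).exists_parent_mem u huc huc'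
    exact ⟨_, hlight b hb, mem_insert_of_mem hub, mem_insert_of_mem hpub⟩

lemma card_le_of_mem_glue (hm : m ∈ T.children v)
    (hmax : ∀ c ∈ T.children v, #(T.subtree c) ≤ #(T.subtree m))
    {b : Finset V} (hb : b ∈ T.glue v m B) : #b ≤ Nat.log 2 #(T.subtree v) + 1 := by
  rcases mem_glue.mp hb with hb | rfl | hb
  · obtain ⟨c, hc, b', hb', rfl⟩ := mem_lightBags.mp hb
    obtain ⟨hcm, hc⟩ := mem_erase.mp hc
    have := (hB c hc).card_le b' hb'
    have := log_card_subtree_add_one_le hc hm hcm (hmax c hc)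
    have := card_insert_le v b'
    omega
  · have h2 : 2 ≤ #(T.subtree v) := by
      have := card_subtree_lt_of_mem_children hm
      have := card_pos.mpr ⟨m, T.mem_subtree_self m⟩
      omega
    have := Nat.log_pos one_lt_two h2
    have := card_le_two (a := v) (b := m)
    omega
  · have := (hB m hm).card_le b hb
    have := Nat.log_mono_right (b := 2) (card_le_card (subtree_subset_of_mem_children hm))
    omega

lemma contiguousIn_lightBags {u : V} (huv : u ≠ v) : ContiguousIn u (T.lightBags v m B) := by
  have hsub : ∀ c ∈ (T.children v).erase m, ∀ b ∈ (B c).map (insert v), u ∈ b →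
      u ∈ T.subtree c := by
    intro c hc b hb hub
    obtain ⟨b', hb', rfl⟩ := List.mem_map.mp hb
    exact (hB c (mem_of_mem_erase hc)).subset_subtree b' hb' ((mem_insert.mp hub).resolve_left huv)
  rw [lightBags, List.flatMap_def]
  refine contiguousIn_flatten (fun L hL => ?_) ?_
  · obtain ⟨c, hc, rfl⟩ := List.mem_map.mp hL
    exact ((hB c (mem_of_mem_erase (mem_toList.mp hc))).contiguousIn u).map_insert v
  · rw [List.pairwise_map]
    refine (nodup_toList _).pairwise_of_forall_ne fun c hc c' hc' hne => ?_
    rw [mem_toList] at hc hc'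
    rintro ⟨b, hb, hub⟩ b' hb' hub'
    exact disjoint_left.mp (disjoint_subtree_of_mem_children (mem_of_mem_erase hc)
      (mem_of_mem_erase hc') hne) (hsub c hc b hb hub) (hsub c' hc' b' hb' hub')

lemma contiguousIn_glue (hm : m ∈ T.children v) (u : V) : ContiguousIn u (T.glue v m B) := by
  have hvB : ∀ b ∈ B m, v ∉ b := fun b hb hv =>
    notMem_subtree_of_mem_children hm ((hB m hm).subset_subtree b hb hv)
  rcases eq_or_ne u v with rfl | huv
  · exact (contiguousIn_of_forall_mem fun _ => mem_of_mem_lightBags_append).append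
      (contiguousIn_of_forall_notMem hvB) fun _ ⟨b, hb, hub⟩ => absurd hub (hvB b hb)
  have hlight : ∀ b ∈ T.lightBags v m B, u ∈ b → u ∉ T.subtree m := by
    intro b hb hub hum
    obtain ⟨c, hc, b', hb', rfl⟩ := mem_lightBags.mp hb
    obtain ⟨hcm, hc⟩ := mem_erase.mp hc
    have huc := (hB c hc).subset_subtree b' hb' ((mem_insert.mp hub).resolve_left huv)
    exact disjoint_left.mp (disjoint_subtree_of_mem_children hc hm hcm) huc hum
  refine ((contiguousIn_lightBags hB huv).append (contiguousIn_singleton u _) ?_).append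
    ((hB m hm).contiguousIn u) ?_
  · rintro ⟨b, hb, hub⟩ ⟨_, hb', hu⟩
    obtain rfl : u = m := by simpa [List.mem_singleton.mp hb', huv] using hu
    exact absurd (T.mem_subtree_self u) (hlight b hb hub)
  · rintro ⟨b, hb, hub⟩ ⟨b', hb', hub'⟩
    have hum := (hB m hm).subset_subtree b' hb' hub'
    rcases List.mem_append.mp hb with hb | hb
    · exact absurd hum (hlight b hb hub)
    obtain rfl : u = m := by simpa [List.mem_singleton.mp hb, huv] using hub
    refine ⟨?_, (hB u hm).mem_head⟩
    rw [List.length_append, List.length_singleton, Nat.add_sub_cancel,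
      List.getD_append_right _ _ _ _ le_rfl]
    simp

lemma isSubtreeDecomp_glue (hm : m ∈ T.children v)
    (hmax : ∀ c ∈ T.children v, #(T.subtree c) ≤ #(T.subtree m)) :
    T.IsSubtreeDecomp v (T.glue v m B) where
  subset_subtree _ := subset_subtree_of_mem_glue hB hm
  mem_head := mem_getD_zero_glue
  exists_parent_mem _ := exists_parent_mem_glue hB
  card_le _ := card_le_of_mem_glue hB hm hmax
  contiguousIn := contiguousIn_glue hB hm

end Glue

variable (T)

lemma isSubtreeDecomp_bags {k : ℕ} {v : V} (hk : #(T.subtree v) ≤ k) :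
    T.IsSubtreeDecomp v (T.bags k v) := by
  induction k generalizing v with
  | zero => exact absurd hk (card_pos.mpr ⟨v, T.mem_subtree_self v⟩).not_ge
  | succ k ih =>
    rcases h : T.heavyChild v with _ | m
    · rw [bags, h]
      exact isSubtreeDecomp_singleton (heavyChild_eq_none.mp h)
    · rw [bags, h]
      refine isSubtreeDecomp_glue (fun c hc => ih ?_) (mem_children_of_heavyChild h)
        fun c hc => card_subtree_le_heavyChild h hc
      have := card_subtree_lt_of_mem_children hc
      omega

end ParentTree

namespace SimpleGraph

variable {V : Type*} {G : SimpleGraph V}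

lemma Connected.exists_adj_dist_add_one (hG : G.Connected) (r : V) {v : V} (hv : v ≠ r) :
    ∃ w, G.Adj v w ∧ G.dist r v = G.dist r w + 1 := by
  obtain ⟨q, hq⟩ := hG.exists_walk_length_eq_dist v r
  cases q with
  | nil => exact absurd rfl hv
  | @cons _ w _ hadj q =>
    refine ⟨w, hadj, ?_⟩
    have := dist_le q
    have : G.dist r v = G.dist v r := dist_comm
    have : G.dist r w = G.dist w r := dist_comm
    rw [Walk.length_cons] at hq
    rcases hadj.symm.diff_dist_adj (u := r) with h | h | h <;> omega

lemma IsTree.eq_penultimate_of_dist_add_one (hG : G.IsTree) {r v w : V} {q : G.Walk r v}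
    (hq : q.IsPath) (hadj : G.Adj v w) (hd : G.dist r v = G.dist r w + 1) :
    w = q.penultimate := by
  classical
  refine hG.isAcyclic.eq_penultimate_of_adj_end hq hadj (by_contra fun hw => ?_)
  obtain ⟨p, hp, hpl⟩ := hG.connected.exists_path_of_dist r w
  have hv := hG.isAcyclic.mem_support_of_ne_mem_support_of_adj_of_isPath hp hq hadj.symm hw
  have := (dist_le (p.takeUntil v hv)).trans (p.length_takeUntil_le_length hv)
  omega

variable [DecidableEq V]

noncomputable def Connected.parentTree (hG : G.Connected) (r : V) : ParentTree V where
  root := r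
  parent v := if hv : v = r then r else (hG.exists_adj_dist_add_one r hv).choose
  depth := G.dist r
  depth_root := dist_self
  depth_parent v hv := by
    simp only [dif_neg hv]
    exact (hG.exists_adj_dist_add_one r hv).choose_spec.2

lemma Connected.adj_parent (hG : G.Connected) {r v : V} (hv : v ≠ r) :
    G.Adj v ((hG.parentTree r).parent v) := by
  simp only [parentTree, dif_neg hv]
  exact (hG.exists_adj_dist_add_one r hv).choose_spec.1

lemma IsTree.parent_eq_of_adj (hG : G.IsTree) (r : V) {u w : V} (hadj : G.Adj u w)
    (hd : G.dist r u = G.dist r w + 1) : u ≠ r ∧ (hG.connected.parentTree r).parent u = w := by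
  have hur : u ≠ r := by
    rintro rfl
    simp at hd
  obtain ⟨q, hq, -⟩ := hG.connected.exists_path_of_dist r u
  refine ⟨hur, (hG.eq_penultimate_of_dist_add_one hq (hG.connected.adj_parent hur) ?_).trans
    (hG.eq_penultimate_of_dist_add_one hq hadj hd).symm⟩
  exact (hG.connected.parentTree r).depth_parent u hur

lemma IsTree.exists_mem_of_adj [Fintype V] (hG : G.IsTree) {r : V} {L : List (Finset V)}
    (hL : (hG.connected.parentTree r).IsSubtreeDecomp r L) {u w : V} (huw : G.Adj u w) :
    ∃ b ∈ L, u ∈ b ∧ w ∈ b := by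
  have hsub : (hG.connected.parentTree r).subtree r = univ := ParentTree.subtree_root _
  have hpar : ∀ {x y : V}, G.Adj x y → G.dist r x = G.dist r y + 1 → ∃ b ∈ L, x ∈ b ∧ y ∈ b := by
    intro x y hxy hd
    obtain ⟨hxr, hpx⟩ := hG.parent_eq_of_adj r hxy hd
    rw [← hpx]
    refine hL.exists_parent_mem x ?_ hxr
    simp [hsub]
  rcases hG.dist_eq_dist_add_one_of_adj r huw with hd | hd
  · exact hpar huw hd
  · obtain ⟨b, hb, hwb, hub⟩ := hpar huw.symm hd
    exact ⟨b, hb, hub, hwb⟩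

end SimpleGraph

theorem tree_pathdecomp_log_general (V : Type) [Fintype V] (G : SimpleGraph V)
    (hG : G.IsTree) :
    ∃ (ℓ : ℕ) (X : Fin ℓ → Finset V), IsPathDecomp G X ∧
      ∀ i, (X i).card ≤ Nat.log 2 (Fintype.card V) + 1 := by
  classical
  obtain ⟨r⟩ := hG.connected.nonempty
  let T := hG.connected.parentTree r
  have hsub : T.subtree r = univ := T.subtree_root
  have hT := T.isSubtreeDecomp_bags (k := Fintype.card V) (v := r) (by rw [hsub, card_univ])
  refine ⟨_, _, isPathDecomp_of_list (fun v => hT.exists_mem (by simp [hsub]))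
    (fun u w => hG.exists_mem_of_adj hT) hT.contiguousIn, fun i => ?_⟩
  simpa [hsub] using hT.card_le _ (List.getElem_mem _)

/-- Every tree on `n ≥ 2` vertices has a path decomposition of width at most
`log₂ n`, i.e. with every bag of size at most `log₂ n + 1`. -/
theorem tree_pathdecomp_log (V : Type) [Fintype V] (G : SimpleGraph V)
    (hG : G.IsTree) (hn : 2 ≤ Fintype.card V) :
    ∃ (ℓ : ℕ) (X : Fin ℓ → Finset V), IsPathDecomp G X ∧
      ∀ i, (X i).card ≤ Nat.log 2 (Fintype.card V) + 1 :=
  tree_pathdecomp_log_general V G hG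
end

section
/- Every tree on n vertices has pathwidth at most log₂(n). -/
/-- The pathwidth of `G` : the minimum over all path decompositions of the
maximum bag size minus one. -/
noncomputable def pathwidth {V : Type} (G : SimpleGraph V) : ℕ :=
  sInf {w : ℕ | ∃ (ℓ : ℕ) (X : Fin ℓ → Finset V),
    IsPathDecomp G X ∧ ∀ i, (X i).card - 1 ≤ w}

open Finset

variable {V : Type*}

structure IsPathDecompOn (G : SimpleGraph V) (S : Finset V) {ℓ : ℕ} (X : Fin ℓ → Finset V) :
    Prop where
  subset : ∀ i, X i ⊆ S
  cover : ∀ v ∈ S, ∃ i, v ∈ X i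
  adj : ∀ u ∈ S, ∀ v ∈ S, G.Adj u v → ∃ i, u ∈ X i ∧ v ∈ X i
  interval : ∀ v (i j k : Fin ℓ), i ≤ j → j ≤ k → v ∈ X i → v ∈ X k → v ∈ X j

def HasPathDecompOn (G : SimpleGraph V) (S : Finset V) (b : ℕ) : Prop :=
  ∃ (ℓ : ℕ) (X : Fin ℓ → Finset V), IsPathDecompOn G S X ∧ ∀ i, #(X i) ≤ b

namespace HasPathDecompOn

variable {G : SimpleGraph V} {S T : Finset V} {b : ℕ}

lemma empty (G : SimpleGraph V) (b : ℕ) : HasPathDecompOn G ∅ b :=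
  ⟨0, Fin.elim0, ⟨fun i => i.elim0, by simp, by simp, fun _ i => i.elim0⟩, fun i => i.elim0⟩

variable [DecidableEq V]

lemma union (hST : Disjoint S T) (hadj : ∀ u ∈ S, ∀ v ∈ T, ¬ G.Adj u v)
    (hS : HasPathDecompOn G S b) (hT : HasPathDecompOn G T b) :
    HasPathDecompOn G (S ∪ T) b := by
  obtain ⟨m, X, hX, hXb⟩ := hS
  obtain ⟨n, Y, hY, hYb⟩ := hT
  refine ⟨m + n, Fin.append X Y, ⟨fun i => ?_, fun v hv => ?_, fun u hu v hv huv => ?_, ?_⟩,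
    Fin.addCases (by simpa using hXb) (by simpa using hYb)⟩
  · induction i using Fin.addCases <;> simp only [Fin.append_left, Fin.append_right]
    exacts [(hX.subset _).trans subset_union_left, (hY.subset _).trans subset_union_right]
  · rcases mem_union.1 hv with hv | hv
    · obtain ⟨i, hi⟩ := hX.cover v hv
      exact ⟨Fin.castAdd n i, by simpa using hi⟩
    · obtain ⟨i, hi⟩ := hY.cover v hv
      exact ⟨Fin.natAdd m i, by simpa using hi⟩
  · rcases mem_union.1 hu with hu | hu <;> rcases mem_union.1 hv with hv | hv
    · obtain ⟨i, hi⟩ := hX.adj u hu v hv huv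
      exact ⟨Fin.castAdd n i, by simpa using hi⟩
    · exact absurd huv (hadj u hu v hv)
    · exact absurd huv.symm (hadj v hv u hu)
    · obtain ⟨i, hi⟩ := hY.adj u hu v hv huv
      exact ⟨Fin.natAdd m i, by simpa using hi⟩
  · intro v i j k hij hjk hi hk
    induction i using Fin.addCases <;> induction j using Fin.addCases <;>
      induction k using Fin.addCases <;>
      simp only [Fin.le_def, Fin.val_castAdd, Fin.val_natAdd, Fin.append_left,
        Fin.append_right] at hij hjk hi hk ⊢
    -- each placement of `i ≤ j ≤ k` is out of order, lies in one half, or puts `v` in `S ∩ T`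
    all_goals first
      | omega
      | exact hX.interval v _ _ _ hij hjk hi hk
      | exact hY.interval v _ _ _ (Fin.le_def.2 (by omega)) (Fin.le_def.2 (by omega)) hi hk
      | exact absurd (hY.subset _ hk) (disjoint_left.1 hST (hX.subset _ hi))

lemma insert (c : V) (hS : HasPathDecompOn G S b) :
    HasPathDecompOn G (insert c S) (b + 1) := by
  rcases S.eq_empty_or_nonempty with rfl | ⟨s, hs⟩
  · refine ⟨1, fun _ => {c}, ⟨?_, fun v hv => ⟨0, by simpa using hv⟩, ?_, ?_⟩, ?_⟩ <;> simp
  obtain ⟨ℓ, X, hX, hXb⟩ := hS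
  refine ⟨ℓ, fun i => Insert.insert c (X i),
    ⟨fun i => insert_subset_insert c (hX.subset i), ?_, ?_, ?_⟩,
    fun i => (card_insert_le _ _).trans (Nat.succ_le_succ (hXb i))⟩
  · intro v hv
    rcases mem_insert.1 hv with rfl | hv
    · obtain ⟨i, -⟩ := hX.cover s hs
      exact ⟨i, mem_insert_self _ _⟩
    · obtain ⟨i, hi⟩ := hX.cover v hv
      exact ⟨i, mem_insert_of_mem hi⟩
  · intro u hu v hv huv
    rcases mem_insert.1 hu with rfl | huS
    · obtain ⟨i, hi⟩ := hX.cover v ((mem_insert.1 hv).resolve_left huv.ne.symm)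
      exact ⟨i, mem_insert_self _ _, mem_insert_of_mem hi⟩
    rcases mem_insert.1 hv with rfl | hvS
    · obtain ⟨i, hi⟩ := hX.cover u huS
      exact ⟨i, mem_insert_of_mem hi, mem_insert_self _ _⟩
    · obtain ⟨i, hi⟩ := hX.adj u huS v hvS huv
      exact ⟨i, mem_insert_of_mem hi.1, mem_insert_of_mem hi.2⟩
  · intro v i j k hij hjk hi hk
    rcases eq_or_ne v c with rfl | hvc
    · exact mem_insert_self _ _
    · simp only [mem_insert, hvc, false_or] at hi hk ⊢
      exact hX.interval v i j k hij hjk hi hk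

end HasPathDecompOn

namespace SimpleGraph

variable (G : SimpleGraph V)

def restrict (S : Finset V) : SimpleGraph V where
  Adj a b := G.Adj a b ∧ a ∈ S ∧ b ∈ S
  symm := ⟨fun _ _ h => ⟨h.1.symm, h.2.2, h.2.1⟩⟩
  loopless := ⟨fun a h => G.loopless.irrefl a h.1⟩

open Classical in
noncomputable def componentIn (S : Finset V) (v : V) : Finset V :=
  {w ∈ S | (G.restrict S).Reachable v w}

variable {G} {S T : Finset V} {u v w x c : V}

lemma restrict_mono (hST : S ⊆ T) : G.restrict S ≤ G.restrict T :=
  fun _ _ h => ⟨h.1, hST h.2.1, hST h.2.2⟩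

@[simp]
lemma mem_componentIn : w ∈ G.componentIn S v ↔ w ∈ S ∧ (G.restrict S).Reachable v w := by
  simp [componentIn]

lemma componentIn_subset : G.componentIn S v ⊆ S :=
  fun _ hw => (mem_componentIn.1 hw).1

lemma mem_componentIn_self (hv : v ∈ S) : v ∈ G.componentIn S v :=
  mem_componentIn.2 ⟨hv, .refl v⟩

lemma componentIn_mono (hST : S ⊆ T) : G.componentIn S v ⊆ G.componentIn T v :=
  fun _ hw => mem_componentIn.2
    ⟨hST (mem_componentIn.1 hw).1, (mem_componentIn.1 hw).2.mono (restrict_mono hST)⟩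

lemma componentIn_eq_of_mem (hw : w ∈ G.componentIn S v) :
    G.componentIn S w = G.componentIn S v := by
  ext u
  simp only [mem_componentIn]
  exact and_congr_right fun _ =>
    ⟨(mem_componentIn.1 hw).2.trans, (mem_componentIn.1 hw).2.symm.trans⟩

lemma mem_componentIn_of_adj (hw : w ∈ G.componentIn S v) (hu : u ∈ S) (huw : G.Adj u w) :
    u ∈ G.componentIn S v :=
  mem_componentIn.2 ⟨hu, (mem_componentIn.1 hw).2.trans
    (Adj.reachable ⟨huw.symm, componentIn_subset hw, hu⟩)⟩

variable [DecidableEq V]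

lemma exists_adj_mem_componentIn_erase (p : (G.restrict S).Walk u c) (hu : u ∈ S)
    (huc : u ≠ c) : ∃ x ∈ G.componentIn (S.erase c) u, G.Adj x c := by
  induction p with
  | nil => exact absurd rfl huc
  | @cons u y c huy p ih =>
    by_cases hyc : y = c
    · subst hyc
      exact ⟨u, mem_componentIn_self (mem_erase.2 ⟨huc, hu⟩), huy.1⟩
    obtain ⟨x, hx, hxc⟩ := ih huy.2.2 hyc
    have hyu : y ∈ G.componentIn (S.erase c) u :=
      mem_componentIn_of_adj (mem_componentIn_self (mem_erase.2 ⟨huc, hu⟩))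
        (mem_erase.2 ⟨hyc, huy.2.2⟩) huy.1.symm
    exact ⟨x, componentIn_eq_of_mem hyu ▸ hx, hxc⟩

lemma mem_componentIn_erase_or (p : (G.restrict S).Walk w c) (hx : x ∈ S) (hc : c ∈ S)
    (hxc : x ≠ c) : w ∈ G.componentIn (S.erase x) c ∨ w ∈ G.componentIn (S.erase c) x := by
  induction p with
  | nil => exact .inl (mem_componentIn_self (mem_erase.2 ⟨hxc.symm, hc⟩))
  | @cons w y c hwy p ih =>
    rcases eq_or_ne w x with rfl | hwx
    · exact .inr (mem_componentIn_self (mem_erase.2 ⟨hxc, hx⟩))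
    rcases eq_or_ne w c with rfl | hwc
    · exact .inl (mem_componentIn_self (mem_erase.2 ⟨hxc.symm, hc⟩))
    exact (ih hc hxc).imp (mem_componentIn_of_adj · (mem_erase.2 ⟨hwx, hwy.2.1⟩) hwy.1)
      (mem_componentIn_of_adj · (mem_erase.2 ⟨hwc, hwy.2.1⟩) hwy.1)

lemma restrict_erase_le_deleteEdges {e : Sym2 V} (hx : x ∈ e) :
    G.restrict (S.erase x) ≤ G.deleteEdges {e} := by
  rintro a b ⟨hab, ha, hb⟩
  refine deleteEdges_adj.2 ⟨hab, fun he => ?_⟩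
  rw [← Set.mem_singleton_iff.1 he, Sym2.mem_iff] at hx
  rcases hx with rfl | rfl
  exacts [(mem_erase.1 ha).1 rfl, (mem_erase.1 hb).1 rfl]

lemma IsAcyclic.disjoint_componentIn_erase (hG : G.IsAcyclic) (hxc : G.Adj x c) :
    Disjoint (G.componentIn (S.erase x) c) (G.componentIn (S.erase c) x) := by
  refine Finset.disjoint_left.2 fun w hwx hwc =>
    isBridge_iff.1 (isAcyclic_iff_forall_adj_isBridge.1 hG hxc) ?_
  have hxw := (mem_componentIn.1 hwc).2.mono (restrict_erase_le_deleteEdges (Sym2.mem_mk_right x c))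
  have hcw := (mem_componentIn.1 hwx).2.mono (restrict_erase_le_deleteEdges (Sym2.mem_mk_left x c))
  exact hxw.trans hcw.symm

lemma IsAcyclic.card_componentIn_erase_lt (hG : G.IsAcyclic)
    (hS : ∀ a ∈ S, ∀ b ∈ S, (G.restrict S).Reachable a b) (hx : x ∈ S) (hc : c ∈ S)
    (hxc : G.Adj x c) (hbig : #S < 2 * #(G.componentIn (S.erase c) x)) :
    #(G.componentIn (S.erase x) w) < #(G.componentIn (S.erase c) x) := by
  have hxC : x ∈ G.componentIn (S.erase c) x :=
    mem_componentIn_self (mem_erase.2 ⟨hxc.ne, hx⟩)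
  by_cases hcD : c ∈ G.componentIn (S.erase x) w
  · have hDC := hG.disjoint_componentIn_erase (S := S) hxc
    rw [componentIn_eq_of_mem hcD] at hDC
    have : #(G.componentIn (S.erase x) w) + #(G.componentIn (S.erase c) x) ≤ #S := by
      rw [← card_union_of_disjoint hDC]
      exact card_le_card (union_subset (componentIn_subset.trans (erase_subset x S))
        (componentIn_subset.trans (erase_subset c S)))
    omega
  · have hDC : G.componentIn (S.erase x) w ⊆ (G.componentIn (S.erase c) x).erase x := by
      intro u hu
      obtain ⟨p⟩ := hS u (mem_of_mem_erase (componentIn_subset hu)) c hc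
      refine (mem_componentIn_erase_or p hx hc hxc.ne).elim (fun huc => absurd ?_ hcD)
        (mem_erase.2 ⟨ne_of_mem_erase (componentIn_subset hu), ·⟩)
      rw [← componentIn_eq_of_mem hu, componentIn_eq_of_mem huc]
      exact mem_componentIn_self (mem_erase.2 ⟨hxc.ne.symm, hc⟩)
    have := card_le_card hDC
    rw [card_erase_of_mem hxC] at this
    have := card_pos.2 ⟨x, hxC⟩
    omega

lemma IsAcyclic.exists_centroid (hG : G.IsAcyclic)
    (hS : ∀ a ∈ S, ∀ b ∈ S, (G.restrict S).Reachable a b) (hne : S.Nonempty) :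
    ∃ c ∈ S, ∀ u ∈ S.erase c, 2 * #(G.componentIn (S.erase c) u) ≤ #S := by
  obtain ⟨c, hc, hmin⟩ :=
    S.exists_min_image (fun v => (S.erase v).sup fun u => #(G.componentIn (S.erase v) u)) hne
  refine ⟨c, hc, fun u hu => ?_⟩
  by_contra! hbig
  obtain ⟨p⟩ := hS u (mem_of_mem_erase hu) c hc
  obtain ⟨x, hxu, hxc⟩ :=
    exists_adj_mem_componentIn_erase p (mem_of_mem_erase hu) (ne_of_mem_erase hu)
  rw [← componentIn_eq_of_mem hxu] at hbig
  have hxS : x ∈ S.erase c := componentIn_subset hxu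
  have hxle := le_sup (f := fun w => #(G.componentIn (S.erase c) w)) hxS
  have hlt : (S.erase x).sup (fun w => #(G.componentIn (S.erase x) w)) <
      (S.erase c).sup fun w => #(G.componentIn (S.erase c) w) :=
    (Finset.sup_lt_iff (show 0 < _ by omega)).2 fun w _ =>
      (hG.card_componentIn_erase_lt hS (mem_of_mem_erase hxS) hc hxc hbig).trans_le hxle
  exact (hmin x (mem_of_mem_erase hxS)).not_gt hlt

/-- Bounding the components of `S` rather than `S` itself is what lets the bound halve when a
centroid is removed, although `S.erase c` is barely smaller than `S`. -/
lemma IsAcyclic.hasPathDecompOn_of_card_componentIn_lt (hG : G.IsAcyclic) (S : Finset V)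
    (k : ℕ) (hS : ∀ v ∈ S, #(G.componentIn S v) < 2 ^ k) : HasPathDecompOn G S k := by
  induction S using Finset.strongInduction generalizing k with
  | H S ih =>
  by_cases hsplit : ∃ v ∈ S, G.componentIn S v ≠ S
  · obtain ⟨v, hv, hne⟩ := hsplit
    have hCS : G.componentIn S v ⊂ S := ssubset_of_subset_of_ne componentIn_subset hne
    have hC : HasPathDecompOn G (G.componentIn S v) k :=
      ih _ hCS k fun _ _ => (card_le_card componentIn_subset).trans_lt (hS v hv)
    have hR : HasPathDecompOn G (S \ G.componentIn S v) k :=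
      ih _ (sdiff_ssubset hCS.subset ⟨v, mem_componentIn_self hv⟩) k fun u hu =>
        (card_le_card (componentIn_mono sdiff_subset)).trans_lt (hS u (mem_sdiff.1 hu).1)
    have := hC.union disjoint_sdiff (fun a ha b hb hab =>
      (mem_sdiff.1 hb).2 (mem_componentIn_of_adj ha (mem_sdiff.1 hb).1 hab.symm)) hR
    rwa [union_sdiff_of_subset hCS.subset] at this
  push Not at hsplit
  rcases S.eq_empty_or_nonempty with rfl | ⟨s, hs⟩
  · exact HasPathDecompOn.empty G k
  have hcard : #S < 2 ^ k := hsplit s hs ▸ hS s hs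
  obtain ⟨c, hc, hsmall⟩ := hG.exists_centroid
    (fun a ha b hb => (mem_componentIn.1 ((hsplit a ha).symm ▸ hb)).2) ⟨s, hs⟩
  obtain ⟨k, rfl⟩ : ∃ k', k = k' + 1 :=
    Nat.exists_eq_succ_of_ne_zero fun hk => by
      rw [hk, pow_zero] at hcard
      have := card_pos.2 ⟨s, hs⟩
      omega
  have := (ih _ (erase_ssubset hc) k fun u hu => by
    have := hsmall u hu; rw [pow_succ] at hcard; omega).insert c
  rwa [insert_erase hc] at this

end SimpleGraph

lemma pathwidth_le_of_hasPathDecompOn_univ {V : Type} [Fintype V] {G : SimpleGraph V} {k : ℕ}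
    (h : HasPathDecompOn G univ (k + 1)) : pathwidth G ≤ k := by
  obtain ⟨ℓ, X, hX, hXb⟩ := h
  refine Nat.sInf_le ⟨ℓ, X, ⟨fun v => hX.cover v (mem_univ v),
    fun u v huv => hX.adj u (mem_univ u) v (mem_univ v) huv, hX.interval⟩, fun i => ?_⟩
  have := hXb i
  omega

/-- Every tree on `n` vertices has pathwidth at most `log₂ n`. -/
theorem tree_pathwidth_log (V : Type) [Fintype V] (G : SimpleGraph V)
    (hG : G.IsTree) : pathwidth G ≤ Nat.log 2 (Fintype.card V) := by
  classical
  refine pathwidth_le_of_hasPathDecompOn_univ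
    (hG.isAcyclic.hasPathDecompOn_of_card_componentIn_lt univ _ fun v _ => ?_)
  calc #(G.componentIn univ v) ≤ Fintype.card V := card_le_univ _
    _ < 2 ^ (Nat.log 2 (Fintype.card V) + 1) := Nat.lt_pow_succ_log_self one_lt_two _
end

section
/- For every graph G, the tree-partition-width of G is at least (treewidth(G) + 1)/2, i.e., tw(G) + 1 ≤ 2·tpw(G). -/
/-- `IsTreeDecomp G T X` : `(T, X)` is a tree decomposition of `G`: `T` is a
tree, every vertex of `G` is in some bag, every edge of `G` has both endpoints
in a common bag, and for each vertex the set of tree nodes whose bags contain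
it induces a connected (nonempty) subtree of `T`. -/
def IsTreeDecomp {V ι : Type} (G : SimpleGraph V) (T : SimpleGraph ι)
    (X : ι → Finset V) : Prop :=
  T.IsTree ∧
  (∀ v : V, ∃ i, v ∈ X i) ∧
  (∀ u v : V, G.Adj u v → ∃ i, u ∈ X i ∧ v ∈ X i) ∧
  (∀ v : V, (SimpleGraph.induce {i : ι | v ∈ X i} T).Connected)

/-- The treewidth of `G` : the minimum over all tree decompositions of the
maximum bag size minus one. -/
noncomputable def treewidth (V : Type) (G : SimpleGraph V) : ℕ :=
  sInf {w : ℕ | ∃ (ι : Type) (T : SimpleGraph ι) (X : ι → Finset V),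
    IsTreeDecomp G T X ∧ ∀ i, (X i).card - 1 ≤ w}

/-- `IsTreePartition G T X` : `(T, X)` is a tree-partition of `G`: `T` is a
tree, the bags are nonempty and partition `V(G)`, and every edge of `G` lies
within a bag or between bags of adjacent tree nodes. -/
def IsTreePartition {V ι : Type} (G : SimpleGraph V) (T : SimpleGraph ι)
    (X : ι → Finset V) : Prop :=
  T.IsTree ∧
  (∀ i : ι, (X i).Nonempty) ∧
  (∀ v : V, ∃! i, v ∈ X i) ∧
  (∀ u v : V, G.Adj u v → ∀ i j : ι, u ∈ X i → v ∈ X j → i = j ∨ T.Adj i j)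

/-- The tree-partition-width of `G` : the minimum width (maximum bag size)
over all tree-partitions of `G`. -/
noncomputable def treePartitionWidth (V : Type) (G : SimpleGraph V) : ℕ :=
  sInf {w : ℕ | ∃ (ι : Type) (T : SimpleGraph ι) (X : ι → Finset V),
    IsTreePartition G T X ∧ ∀ i, (X i).card ≤ w}

open SimpleGraph in
lemma key_construction {V ι : Type} [DecidableEq V] (G : SimpleGraph V) (T : SimpleGraph ι)
    (X : ι → Finset V) (h : IsTreePartition G T X) (w : ℕ) (hw : ∀ i, (X i).card ≤ w) :
    ∃ Y : ι → Finset V, IsTreeDecomp G T Y ∧ ∀ i, (Y i).card ≤ 2 * w := by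
  classical
  obtain ⟨htree, hne, huniq, hedge⟩ := h
  obtain ⟨r⟩ : Nonempty ι := htree.1.nonempty
  have hEU := htree.existsUnique_path
  let p : ∀ i, T.Walk i r := fun i => (hEU i r).exists.choose
  have hp : ∀ i, (p i).IsPath := fun i => (hEU i r).exists.choose_spec
  have hpu : ∀ i (q : T.Walk i r), q.IsPath → q = p i := fun i q hq =>
    (hEU i r).unique hq (hp i)
  set par : ι → ι := fun i => (p i).getVert 1 with hpar
  have hparr : par r = r := by
    have h0 : (Walk.nil : T.Walk r r) = p r := hpu r Walk.nil Walk.IsPath.nil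
    show (p r).getVert 1 = r
    rw [← h0]
    exact Walk.getVert_of_length_le _ (by simp)
  have hadj_par : ∀ i, i ≠ r → T.Adj i (par i) := by
    intro i hi
    have hlen : 0 < (p i).length := by
      rcases Nat.eq_zero_or_pos (p i).length with h0 | h0
      · exact absurd (Walk.eq_of_length_eq_zero h0) hi
      · exact h0
    have := (p i).adj_getVert_succ hlen
    simpa using this
  have hC : ∀ i j, T.Adj i j → par i = j ∨ par j = i := by
    intro i j hij
    by_cases hjs : j ∈ (p i).support
    · left
      have ht : ((p i).takeUntil j hjs) = Walk.cons hij Walk.nil := by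
        have h1 : ((p i).takeUntil j hjs).IsPath := (hp i).takeUntil hjs
        have h2 : (Walk.cons hij (Walk.nil : T.Walk j j)).IsPath :=
          (Path.singleton hij).2
        exact ((hEU i j).unique h1 h2)
      have hs := (p i).take_spec hjs
      have h2 := congrArg (fun q : T.Walk i r => q.getVert 1) hs
      simp only [ht, Walk.cons_append, Walk.nil_append, Walk.getVert_cons_succ,
        Walk.getVert_zero] at h2
      exact h2.symm
    · right
      have hq : (Walk.cons hij.symm (p i)).IsPath := (hp i).cons hjs
      have heq : Walk.cons hij.symm (p i) = p j := hpu j _ hq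
      show (p j).getVert 1 = i
      rw [← heq, Walk.getVert_cons_succ, Walk.getVert_zero]
  refine ⟨fun i => X i ∪ X (par i), ⟨htree, ?_, ?_, ?_⟩, ?_⟩
  · intro v
    obtain ⟨i, hi, _⟩ := huniq v
    exact ⟨i, Finset.mem_union_left _ hi⟩
  · intro u v huv
    obtain ⟨i, hi, _⟩ := huniq u
    obtain ⟨j, hj, _⟩ := huniq v
    rcases hedge u v huv i j hi hj with rfl | hadj
    · exact ⟨i, Finset.mem_union_left _ hi, Finset.mem_union_left _ hj⟩
    · rcases hC i j hadj with hpij | hpji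
      · exact ⟨i, Finset.mem_union_left _ hi,
          Finset.mem_union_right _ (hpij ▸ hj)⟩
      · exact ⟨j, Finset.mem_union_right _ (hpji ▸ hi),
          Finset.mem_union_left _ hj⟩
  · intro v
    obtain ⟨b, hb, hbu⟩ := huniq v
    have hbS : v ∈ X b ∪ X (par b) := Finset.mem_union_left _ hb
    have hreach : ∀ x : {i : ι | v ∈ X i ∪ X (par i)},
        (SimpleGraph.induce {i : ι | v ∈ X i ∪ X (par i)} T).Reachable x ⟨b, hbS⟩ := by
      rintro ⟨a, ha⟩
      by_cases hab : a = b
      · subst hab; exact Reachable.refl _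
      · have hpa : par a = b := by
          rcases Finset.mem_union.mp ha with h1 | h1
          · exact absurd (hbu a h1) hab
          · exact hbu _ h1
        have har : a ≠ r := fun hr => hab (by rw [hr, ← hpa, hr, hparr])
        have : T.Adj a b := hpa ▸ hadj_par a har
        exact (SimpleGraph.Adj.reachable (by simpa using this))
    show (SimpleGraph.induce {i : ι | v ∈ X i ∪ X (par i)} T).Connected
    haveI : Nonempty ↑{i : ι | v ∈ X i ∪ X (par i)} := ⟨⟨b, hbS⟩⟩
    exact SimpleGraph.Connected.mk (fun x y => (hreach x).trans (hreach y).symm)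
  · intro i
    calc (X i ∪ X (par i)).card ≤ (X i).card + (X (par i)).card := Finset.card_union_le _ _
      _ ≤ w + w := Nat.add_le_add (hw i) (hw (par i))
      _ = 2 * w := (two_mul w).symm

/-- For every graph `G`, `tw(G) + 1 ≤ 2 · tpw(G)`. -/
theorem treewidth_le_treePartitionWidth (V : Type) [Fintype V] [Nonempty V]
    (G : SimpleGraph V) :
    treewidth V G + 1 ≤ 2 * treePartitionWidth V G := by
  classical
  have htriv : IsTreePartition G (⊥ : SimpleGraph PUnit) (fun _ => (Finset.univ : Finset V)) := by
    refine ⟨⟨SimpleGraph.Connected.mk (fun u v => by rw [Subsingleton.elim u v]), ?_⟩, fun _ => Finset.univ_nonempty, fun v => ⟨PUnit.unit, Finset.mem_univ v, fun _ _ => rfl⟩, fun _ _ _ i j _ _ => Or.inl (Subsingleton.elim i j)⟩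
    intro v c hc
    cases c with
    | nil => exact hc.ne_nil rfl
    | cons h _ => simp at h
  have hnonempty : {w : ℕ | ∃ (ι : Type) (T : SimpleGraph ι) (X : ι → Finset V),
      IsTreePartition G T X ∧ ∀ i, (X i).card ≤ w}.Nonempty :=
    ⟨Fintype.card V, PUnit, ⊥, fun _ => Finset.univ, htriv, fun _ => le_rfl⟩
  have hmem := Nat.sInf_mem hnonempty
  obtain ⟨ι, T, X, hpart, hwle⟩ := hmem
  set w := treePartitionWidth V G with hwdef
  obtain ⟨i0⟩ : Nonempty ι := hpart.1.1.nonempty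
  have hw1 : 1 ≤ w := le_trans (Finset.card_pos.mpr (hpart.2.1 i0)) (hwle i0)
  obtain ⟨Y, hdec, hY⟩ := key_construction G T X hpart w hwle
  have htw : treewidth V G ≤ 2 * w - 1 :=
    Nat.sInf_le ⟨ι, T, Y, hdec, fun i => by have := hY i; omega⟩
  omega
end

section
/- Let G = (V,E) be a graph with colour lists, and let the graph H be constructed from G (with vertex classes V_1,...,V_k) as follows: H has vertices v_1,...,v_k with L(v_i) = V_i, and for each non-edge uv of G (u ∈ V_i, v ∈ V_j, i ≠ j) a vertex x_{uv} with list {u,v} adjacent to v_i and v_j. Then H admits a proper list colouring if and only if G contains a multicoloured clique, i.e., vertices a_1 ∈ V_1, ..., a_k ∈ V_k that are pairwise adjacent in G. -/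
/-- The vertex gadgets of the reduction: one vertex `x_{uv}` for each ordered
non-edge `(u,v)` of `G` whose endpoints lie in distinct classes. -/
def NonEdge {V : Type} (G : SimpleGraph V) {k : ℕ} (f : V → Fin k) : Type :=
  {p : V × V // ¬ G.Adj p.1 p.2 ∧ f p.1 ≠ f p.2}

/-- The graph `H` of the reduction: vertices `v_1, …, v_k` (given by `Fin k`)
together with a vertex `x_{uv}` for each non-edge `uv` of `G` with endpoints in
distinct classes; `x_{uv}` is adjacent exactly to the class vertices `v_i` with
`u ∈ V_i` or `v ∈ V_i`. -/
def redGraph {V : Type} (G : SimpleGraph V) {k : ℕ} (f : V → Fin k) :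
    SimpleGraph (Fin k ⊕ NonEdge G f) :=
  SimpleGraph.fromRel (fun x y =>
    match x, y with
    | Sum.inl i, Sum.inr p => i = f p.1.1 ∨ i = f p.1.2
    | _, _ => False)

/-- The colour lists of the reduction: `L(v_i) = V_i` and `L(x_{uv}) = {u, v}`;
colours are vertices of `G`. -/
def redLists {V : Type} (G : SimpleGraph V) {k : ℕ} (f : V → Fin k) :
    Fin k ⊕ NonEdge G f → Set V
  | Sum.inl i => {v : V | f v = i}
  | Sum.inr p => {p.1.1, p.1.2}

/-- The graph `H` of the reduction admits a proper list colouring iff `G`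
contains a multicoloured clique, i.e. vertices `a_1 ∈ V_1, …, a_k ∈ V_k`
pairwise adjacent in `G`. -/
theorem reduction_correct {V : Type} (G : SimpleGraph V) (k : ℕ) (hk : 2 ≤ k)
    (f : V → Fin k) :
    (∃ c : Fin k ⊕ NonEdge G f → V,
        (∀ x, c x ∈ redLists G f x) ∧
        ∀ x y, (redGraph G f).Adj x y → c x ≠ c y) ↔
      (∃ a : Fin k → V, (∀ i, f (a i) = i) ∧
        ∀ i j : Fin k, i ≠ j → G.Adj (a i) (a j)) := by
  
  constructor
  · rintro ⟨c, hmem, hprop⟩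
    refine ⟨fun i => c (Sum.inl i), fun i => hmem (Sum.inl i), ?_⟩
    intro i j hij
    by_contra hadj
    by_cases hf : f (c (Sum.inl i)) = f (c (Sum.inl j))
    · have hi : f (c (Sum.inl i)) = i := hmem (Sum.inl i)
      have hj : f (c (Sum.inl j)) = j := hmem (Sum.inl j)
      exact hij (hi ▸ hj ▸ hf)
    · set p : NonEdge G f := ⟨(c (Sum.inl i), c (Sum.inl j)), hadj, hf⟩ with hp
      have hmemp := hmem (Sum.inr p)
      have hi : (redGraph G f).Adj (Sum.inl i) (Sum.inr p) := by
        refine ⟨by simp, Or.inl ?_⟩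
        exact Or.inl (hmem (Sum.inl i)).symm
      have hj : (redGraph G f).Adj (Sum.inl j) (Sum.inr p) := by
        refine ⟨by simp, Or.inl ?_⟩
        exact Or.inr (hmem (Sum.inl j)).symm
      have h1 := hprop _ _ hi
      have h2 := hprop _ _ hj
      rcases hmemp with h | h
      · exact h1 h.symm
      · exact h2 h.symm
  · rintro ⟨a, ha, hadj⟩
    classical
    refine ⟨fun x => match x with
      | Sum.inl i => a i
      | Sum.inr p => if a (f p.1.1) = p.1.1 then p.1.2 else p.1.1, ?_, ?_⟩
    · rintro (i | p)
      · exact ha i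
      · by_cases h : a (f p.1.1) = p.1.1 <;> simp [redLists, h]
    · have key : ∀ (i : Fin k) (p : NonEdge G f),
        (i = f p.1.1 ∨ i = f p.1.2) →
        a i ≠ (if a (f p.1.1) = p.1.1 then p.1.2 else p.1.1) := by
        intro i p hi
        obtain ⟨⟨u, v⟩, hnadj, hne⟩ := p
        simp only at hi hne hnadj ⊢
        have huv : u ≠ v := fun h => hne (by rw [h])
        by_cases h : a (f u) = u
        · rw [if_pos h]
          rcases hi with rfl | rfl
          · rw [h]; exact huv
          · intro hc
            exact hnadj (h ▸ hc ▸ hadj (f u) (f v) hne)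
        · rw [if_neg h]
          rcases hi with rfl | rfl
          · exact h
          · intro hc
            exact hne ((congrArg f hc).symm.trans (ha (f v)))
      rintro (i | p) (j | q) hxy
      · exact absurd hxy.2 (by simp)
      · exact key i q (hxy.2.elim id (fun h => absurd h id))
      · exact fun h => key j p (hxy.2.elim (fun h => absurd h id) id) h.symm
      · exact absurd hxy.2 (by simp)
end

section
/- Let x_1 ≤ x_2 ≤ ... ≤ x_k be non-negative reals with sum at most y. Then for each i ∈ {1,...,k}, x_i ≤ y/(k+1−i), and consequently ∑_{i=1}^{k} (k+3−i)·x_i^4 ≤ 4·y^4. -/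
lemma cube_sum_le (k : ℕ) :
    ∑ m ∈ Finset.range k, (1:ℝ)/((m:ℝ)+1)^3 ≤ 5/4 := by
  rcases k with _ | _ | k
  · norm_num
  · norm_num
  · have h : ∀ n : ℕ, ∑ m ∈ Finset.range (n+2), (1:ℝ)/((m:ℝ)+1)^3
        ≤ 5/4 - 1/(2*((n:ℝ)+2)^2) := by
      intro n
      induction n with
      | zero => norm_num [Finset.sum_range_succ]
      | succ n ih =>
        rw [Finset.sum_range_succ]
        have key : (1:ℝ)/(((n+2:ℕ):ℝ)+1)^3
            ≤ 1/(2*((n:ℝ)+2)^2) - 1/(2*((n:ℝ)+3)^2) := by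
          push_cast
          rw [div_sub_div _ _ (by positivity) (by positivity),
            div_le_div_iff₀ (by positivity) (by positivity)]
          nlinarith [sq_nonneg ((n:ℝ)), Nat.cast_nonneg (α := ℝ) n]
        push_cast at key ⊢
        have e : ((n:ℝ)+1+2)^2 = ((n:ℝ)+3)^2 := by ring
        rw [e]
        linarith
    have h1 := h k
    have h2 : (0:ℝ) < 1/(2*((k:ℝ)+2)^2) := by positivity
    push_cast at h1 ⊢
    linarith

/-- Let `x 0 ≤ x 1 ≤ … ≤ x (k-1)` be non-negative reals with sum at most `y`.
Then for each `i` (so that `x i` is the smallest of the `k - i` values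
`x i, …, x (k-1)`), we have `x i ≤ y / (k - i)`, and consequently
`∑ i, (k + 2 - i) · (x i)^4 ≤ 4 · y^4` (this is the 0-indexed form of
`∑_{i=1}^{k} (k + 3 - i) · x_i^4 ≤ 4 y^4`). -/
theorem sorted_subtree_sum (k : ℕ) (x : Fin k → ℝ) (y : ℝ)
    (hmono : ∀ i j : Fin k, i ≤ j → x i ≤ x j)
    (hnonneg : ∀ i, 0 ≤ x i)
    (hsum : ∑ i, x i ≤ y) :
    (∀ i : Fin k, ((k - (i : ℕ) : ℕ) : ℝ) * x i ≤ y) ∧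
    ∑ i : Fin k, ((k + 2 - (i : ℕ) : ℕ) : ℝ) * (x i) ^ 4 ≤ 4 * y ^ 4 := by
  have hy : 0 ≤ y := le_trans (Finset.sum_nonneg fun i _ => hnonneg i) hsum
  have part1 : ∀ i : Fin k, ((k - (i : ℕ) : ℕ) : ℝ) * x i ≤ y := by
    intro i
    have h1 : ((k - (i:ℕ) : ℕ) : ℝ) * x i ≤ ∑ j ∈ Finset.Ici i, x j := by
      rw [← Fin.card_Ici i]
      have := Finset.card_nsmul_le_sum (Finset.Ici i) x (x i)
        (fun j hj => hmono i j (Finset.mem_Ici.mp hj))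
      simpa [nsmul_eq_mul] using this
    have h2 : ∑ j ∈ Finset.Ici i, x j ≤ ∑ j, x j :=
      Finset.sum_le_sum_of_subset_of_nonneg (Finset.subset_univ _)
        (fun j _ _ => hnonneg j)
    linarith
  refine ⟨part1, ?_⟩
  have hterm : ∀ i : Fin k, ((k + 2 - (i:ℕ) : ℕ) : ℝ) * x i ^ 4
      ≤ 3 * y ^ 4 * (1 / (((k - (i:ℕ) : ℕ) : ℝ)) ^ 3) := by
    intro i
    have hik : (i:ℕ) < k := i.isLt
    set m : ℕ := k - (i:ℕ) with hm
    have hm1 : 1 ≤ m := by omega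
    have hmpos : (0:ℝ) < (m:ℝ) := by exact_mod_cast hm1
    have hx : x i ≤ y / m := by
      rw [le_div_iff₀ hmpos]
      have := part1 i
      linarith [part1 i, mul_comm (x i) (m:ℝ)]
    have hx4 : x i ^ 4 ≤ (y / m) ^ 4 :=
      pow_le_pow_left₀ (hnonneg i) hx 4
    have hcast : ((k + 2 - (i:ℕ) : ℕ) : ℝ) = (m:ℝ) + 2 := by
      have : k + 2 - (i:ℕ) = m + 2 := by omega
      rw [this]; push_cast; ring
    rw [hcast]
    have h3 : (m:ℝ) + 2 ≤ 3 * (m:ℝ) := by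
      have : (1:ℝ) ≤ (m:ℝ) := by exact_mod_cast hm1
      linarith
    have step1 : ((m:ℝ)+2) * x i ^ 4 ≤ 3*(m:ℝ) * (y/m)^4 :=
      mul_le_mul h3 hx4 (pow_nonneg (hnonneg i) 4) (by positivity)
    have step2 : 3*(m:ℝ)*(y/m)^4 = 3 * y ^ 4 * (1/(m:ℝ)^3) := by
      field_simp
    linarith
  calc ∑ i : Fin k, ((k + 2 - (i:ℕ) : ℕ) : ℝ) * x i ^ 4
      ≤ ∑ i : Fin k, 3 * y ^ 4 * (1 / (((k - (i:ℕ) : ℕ) : ℝ)) ^ 3) :=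
        Finset.sum_le_sum (fun i _ => hterm i)
    _ = 3 * y ^ 4 * ∑ i : Fin k, (1 / (((k - (i:ℕ) : ℕ) : ℝ)) ^ 3) := by
        rw [Finset.mul_sum]
    _ = 3 * y ^ 4 * ∑ m ∈ Finset.range k, (1:ℝ)/((m:ℝ)+1)^3 := by
        congr 1
        rw [Fin.sum_univ_eq_sum_range (fun i => (1:ℝ) / ((k - i : ℕ) : ℝ) ^ 3) k,
          ← Finset.sum_range_reflect]
        refine Finset.sum_congr rfl fun j hj => ?_
        have hjk : j < k := Finset.mem_range.mp hj
        have h1 : k - (k - 1 - j) = j + 1 := by omega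
        rw [h1]
        push_cast
        ring
    _ ≤ 3 * y ^ 4 * (5/4) := by
        have := cube_sum_le k
        have h0 : (0:ℝ) ≤ 3 * y ^ 4 := by positivity
        exact mul_le_mul_of_nonneg_left this h0
    _ ≤ 4 * y ^ 4 := by nlinarith [pow_nonneg hy 4]
end
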